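/- If there exists a {3,4,5}-GDD of type g^u all of whose blocks have size 3, and a Sarvate-Beam cube SBC(m) exists for a given m ≥ 2, then there exists an SBGDD_0 of type (mg)^u. -/

import Mathlib

/-- The line sums of an `n × n × n` array `f`: for each direction `d : Fin 3`
and fixed pair of coordinates, the sum over the remaining coordinate. -/
def lineSums (n : ℕ) (f : Fin n → Fin n → Fin n → ℕ) :
    Fin 3 × Fin n × Fin n → ℕ :=
  fun p =>
    if p.1 = 0 then ∑ k, f k p.2.1 p.2.2
    else if p.1 = 1 then ∑ k, f p.2.1 k p.2.2
    else ∑ k, f p.2.1 p.2.2 k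

/-- A Sarvate-Beam cube of order `n`: an `n × n × n` array of nonnegative
integers whose `3n²` line sums are exactly `0, 1, …, 3n² − 1` in some order. -/
def IsSBC (n : ℕ) (f : Fin n → Fin n → Fin n → ℕ) : Prop :=
  Function.Injective (lineSums n f) ∧
  (∀ p, lineSums n f p < 3 * n ^ 2) ∧
  (∀ m < 3 * n ^ 2, ∃ p, lineSums n f p = m)

/-- The frequency of a subset `P` in a multiset of blocks `B`:
the number of blocks (with multiplicity) containing `P`. -/
def pairFreq {V : Type*} [DecidableEq V] (B : Multiset (Finset V)) (P : Finset V) : ℕ :=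
  (B.filter (fun b => P ⊆ b)).card

/-- A Sarvate-Beam group divisible design SBGDD_μ of type `g^u`:
a multiset `B` of 3-element blocks on a point set `V` with group map `grp`
(each group of size `g`), such that same-group pairs have frequency 0 and the
frequencies of cross-group pairs form a bijection onto
`{μ, μ+1, …, μ + g²·C(u,2) − 1}`. -/
def IsSBGDD {V : Type*} [Fintype V] [DecidableEq V] (g u μ : ℕ)
    (grp : V → Fin u) (B : Multiset (Finset V)) : Prop :=
  (∀ i : Fin u, (Finset.univ.filter (fun x => grp x = i)).card = g) ∧
  (∀ b ∈ B, b.card = 3) ∧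
  (∀ x y : V, x ≠ y → grp x = grp y → pairFreq B {x, y} = 0) ∧
  (∀ x y : V, grp x ≠ grp y →
    pairFreq B {x, y} ∈ Finset.Ico μ (μ + g ^ 2 * u.choose 2)) ∧
  (∀ x y x' y' : V, grp x ≠ grp y → grp x' ≠ grp y' →
    pairFreq B {x, y} = pairFreq B {x', y'} → ({x, y} : Finset V) = {x', y'}) ∧
  (∀ n ∈ Finset.Ico μ (μ + g ^ 2 * u.choose 2),
    ∃ x y : V, grp x ≠ grp y ∧ pairFreq B {x, y} = n)

/-!
Give every point weight `m` and replace the `k`-th block `{x, y, z}` of the 3-GDD by the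
triangles `{(x, a), (y, b), (z, c)}`, each taken `f a b c + 3mk` times. A pair of points from
different groups lies over a unique block `{x, y, z}` and on a unique side of its triangles, and
its frequency there is `3m²k` plus a line sum of `f` (adding `3mk` to every cell plays the role of
the paper's Latin squares). As the line sums run through `[0, 3m²)` bijectively, the cross-group
frequencies run through `[0, 3m²·|D|)` bijectively, and `3|D| = g²·C(u,2)` by counting ordered
pairs from different groups.
-/

theorem Nat.eq_and_eq_of_mul_add_eq {K a b s t : ℕ} (hs : s < K) (ht : t < K)
    (h : K * a + s = K * b + t) : a = b ∧ s = t := by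
  have hab : a = b := by
    simpa [Nat.mul_add_div (Nat.zero_lt_of_lt hs), Nat.div_eq_of_lt hs, Nat.div_eq_of_lt ht]
      using congrArg (· / K) h
  subst hab
  exact ⟨rfl, by omega⟩

theorem Nat.two_mul_choose_two (u : ℕ) : 2 * u.choose 2 = u * (u - 1) := by
  rw [Nat.choose_two_right, Nat.mul_div_cancel' (Nat.even_mul_pred_self u).two_dvd]

theorem Fin.exists_succAbove_eq_pair {k l : Fin 3} (hkl : k ≠ l) :
    ∃ d : Fin 3,
      (d.succAbove 0 = k ∧ d.succAbove 1 = l) ∨ (d.succAbove 0 = l ∧ d.succAbove 1 = k) := by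
  revert k l; decide

theorem lineSums_add_const {n : ℕ} (f : Fin n → Fin n → Fin n → ℕ) (t : ℕ)
    (q : Fin 3 × Fin n × Fin n) :
    lineSums n (fun a b c => f a b c + t) q = lineSums n f q + n * t := by
  unfold lineSums
  split_ifs <;> simp [Finset.sum_add_distrib]

section PairFreq

variable {V : Type*} [DecidableEq V]

theorem pairFreq_eq_countP (B : Multiset (Finset V)) (P : Finset V) :
    pairFreq B P = Multiset.countPAddMonoidHom (P ⊆ ·) B :=
  (Multiset.countP_eq_card_filter _ _).symm

theorem pairFreq_sum {ι : Type*} (s : Finset ι) (B : ι → Multiset (Finset V)) (P : Finset V) :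
    pairFreq (∑ i ∈ s, B i) P = ∑ i ∈ s, pairFreq (B i) P := by
  simp only [pairFreq_eq_countP, map_sum]

theorem pairFreq_sum_nsmul_singleton {ι : Type*} (s : Finset ι) (k : ι → ℕ)
    (t : ι → Finset V) (P : Finset V) :
    pairFreq (∑ i ∈ s, k i • ({t i} : Multiset (Finset V))) P =
      ∑ i ∈ s, if P ⊆ t i then k i else 0 := by
  rw [pairFreq_eq_countP, map_sum]
  simp only [map_nsmul, Multiset.coe_countPAddMonoidHom, smul_eq_mul]
  refine Finset.sum_congr rfl fun i _ => ?_
  rw [← Multiset.cons_zero, Multiset.countP_cons, Multiset.countP_zero]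
  split_ifs <;> simp

theorem pairFreq_eq_zero_of_forall_not_subset {B : Multiset (Finset V)} {P : Finset V}
    (h : ∀ t ∈ B, ¬P ⊆ t) : pairFreq B P = 0 := by
  rw [pairFreq, Multiset.card_eq_zero, Multiset.filter_eq_nil]
  exact h

end PairFreq

section Triangle

variable {V : Type*} [DecidableEq V] {m : ℕ}

def triangle (v : Fin 3 → V) (a b c : Fin m) : Finset (V × Fin m) :=
  {(v 0, a), (v 1, b), (v 2, c)}

/-- The side opposite the corner `v d`, so that `d` matches the direction in `lineSums`. -/
def side (v : Fin 3 → V) (q : Fin 3 × Fin m × Fin m) : Finset (V × Fin m) :=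
  {(v (q.1.succAbove 0), q.2.1), (v (q.1.succAbove 1), q.2.2)}

def cubeBlocks (f : Fin m → Fin m → Fin m → ℕ) (v : Fin 3 → V) :
    Multiset (Finset (V × Fin m)) :=
  ∑ p : Fin m × Fin m × Fin m, f p.1 p.2.1 p.2.2 • {triangle v p.1 p.2.1 p.2.2}

theorem mem_triangle {v : Fin 3 → V} {a b c : Fin m} {x : V × Fin m} :
    x ∈ triangle v a b c ↔ ∃ k, x = (v k, ![a, b, c] k) := by
  simp [triangle, Fin.exists_fin_succ]

theorem mk_mem_triangle_iff {v : Fin 3 → V} (hv : Function.Injective v) {a b c i : Fin m}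
    {k : Fin 3} : (v k, i) ∈ triangle v a b c ↔ ![a, b, c] k = i := by
  simp only [mem_triangle, Prod.ext_iff, hv.eq_iff]
  constructor
  · rintro ⟨k, rfl, rfl⟩
    rfl
  · rintro rfl
    exact ⟨k, rfl, rfl⟩

theorem card_triangle {v : Fin 3 → V} (hv : Function.Injective v) (a b c : Fin m) :
    (triangle v a b c).card = 3 := by
  rw [triangle, Finset.card_insert_of_notMem, Finset.card_pair] <;>
    simp [Prod.ext_iff, hv.eq_iff]

theorem exists_eq_triangle_of_mem_cubeBlocks {f : Fin m → Fin m → Fin m → ℕ} {v : Fin 3 → V}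
    {t : Finset (V × Fin m)} (ht : t ∈ cubeBlocks f v) : ∃ a b c, t = triangle v a b c := by
  obtain ⟨p, -, hp⟩ := Multiset.mem_sum.mp ht
  exact ⟨_, _, _, Multiset.mem_singleton.mp (Multiset.mem_nsmul.mp hp).2⟩

theorem pairFreq_cubeBlocks_side (f : Fin m → Fin m → Fin m → ℕ) {v : Fin 3 → V}
    (hv : Function.Injective v) (q : Fin 3 × Fin m × Fin m) :
    pairFreq (cubeBlocks f v) (side v q) = lineSums m f q := by
  obtain ⟨d, i, j⟩ := q
  rw [cubeBlocks, pairFreq_sum_nsmul_singleton]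
  simp only [side, Finset.insert_subset_iff, Finset.singleton_subset_iff, mk_mem_triangle_iff hv,
    Fintype.sum_prod_type, ite_and]
  -- a plain `simp` would reduce `![a, b, c] k` inside the `ite` conditions by `dsimp` and leave
  -- their `Decidable` instances ill-typed, so the corners are evaluated by `simp only` first
  fin_cases d <;>
    simp only [Fin.zero_eta, Fin.mk_one, Fin.reduceFinMk, Fin.succAbove, Fin.reduceLT,
      Fin.reduceCastSucc, Fin.reduceSucc, if_true, if_false, Matrix.cons_val] <;>
    simp [lineSums, Finset.sum_ite_irrel]

theorem exists_side_eq_pair (v : Fin 3 → V) {k l : Fin 3}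
    (hkl : k ≠ l) (i j : Fin m) : ∃ q, side v q = {(v k, i), (v l, j)} := by
  obtain ⟨d, ⟨rfl, rfl⟩ | ⟨rfl, rfl⟩⟩ := Fin.exists_succAbove_eq_pair hkl
  · exact ⟨(d, i, j), rfl⟩
  · exact ⟨(d, j, i), Finset.pair_comm _ _⟩

end Triangle

section Counting

open Finset

variable {V : Type*} [Fintype V] [DecidableEq V] {u g : ℕ} {grp : V → Fin u}

theorem card_filter_grp_ne_of_card_fiber (hsize : ∀ i, #{x | grp x = i} = g) :
    #{p : V × V | grp p.1 ≠ grp p.2} = 2 * (g ^ 2 * u.choose 2) := by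
  have hV : Fintype.card V = u * g := by
    rw [← card_univ, card_eq_sum_card_fiberwise (f := grp) (t := univ) fun _ _ => mem_univ _]
    simp [hsize]
  have hrow : ∀ x, #{y | grp x ≠ grp y} = u * g - g := by
    intro x
    rw [filter_not, card_sdiff_of_subset (filter_subset _ _), card_univ, hV]
    simp_rw [eq_comm (a := grp x), hsize]
  calc #{p : V × V | grp p.1 ≠ grp p.2}
      = ∑ x : V, #{y | grp x ≠ grp y} := by
        simp only [card_filter, Fintype.sum_prod_type]
    _ = u * g * (u * g - g) := by simp [hrow, hV]
    _ = 2 * (g ^ 2 * u.choose 2) := by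
        rw [mul_left_comm, Nat.two_mul_choose_two, ← Nat.sub_one_mul]
        ring

end Counting

section GDD

open Finset

variable {V ι : Type*} [DecidableEq V] {grp : V → ι} {D : Finset (Finset V)}

structure IsThreeGDD (grp : V → ι) (D : Finset (Finset V)) : Prop where
  card_eq_three : ∀ b ∈ D, #b = 3
  not_exists_of_grp_eq : ∀ x y, x ≠ y → grp x = grp y → ¬∃ b ∈ D, ({x, y} : Finset V) ⊆ b
  existsUnique_of_grp_ne : ∀ x y, grp x ≠ grp y → ∃! b, b ∈ D ∧ ({x, y} : Finset V) ⊆ b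

namespace IsThreeGDD

variable (hD : IsThreeGDD grp D)
include hD

theorem grp_ne {b : Finset V} (hb : b ∈ D) {x y : V} (hx : x ∈ b) (hy : y ∈ b) (hxy : x ≠ y) :
    grp x ≠ grp y := fun h =>
  hD.not_exists_of_grp_eq x y hxy h ⟨b, hb, by simp [insert_subset_iff, hx, hy]⟩

theorem eq_of_mem {b b' : Finset V} (hb : b ∈ D) (hb' : b' ∈ D) {x y : V} (hx : x ∈ b)
    (hy : y ∈ b) (hx' : x ∈ b') (hy' : y ∈ b') (hxy : grp x ≠ grp y) : b = b' :=
  (hD.existsUnique_of_grp_ne x y hxy).unique ⟨hb, by simp [insert_subset_iff, hx, hy]⟩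
    ⟨hb', by simp [insert_subset_iff, hx', hy']⟩

theorem exists_mem {x y : V} (hxy : grp x ≠ grp y) : ∃ b ∈ D, x ∈ b ∧ y ∈ b := by
  obtain ⟨b, ⟨hb, hxyb⟩, -⟩ := hD.existsUnique_of_grp_ne x y hxy
  exact ⟨b, hb, hxyb (by simp), hxyb (by simp)⟩

theorem card_filter_grp_ne [Fintype V] [DecidableEq ι] :
    #{p : V × V | grp p.1 ≠ grp p.2} = 6 * #D := by
  have hcover : ({p : V × V | grp p.1 ≠ grp p.2} : Finset (V × V)) = D.biUnion offDiag := by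
    ext ⟨x, y⟩
    simp only [mem_filter, mem_univ, true_and, mem_biUnion, mem_offDiag]
    constructor
    · intro hxy
      obtain ⟨b, hb, hx, hy⟩ := hD.exists_mem hxy
      exact ⟨b, hb, hx, hy, fun h => hxy (congrArg grp h)⟩
    · rintro ⟨b, hb, hx, hy, hxy⟩
      exact hD.grp_ne hb hx hy hxy
  rw [hcover, card_biUnion, sum_const_nat, mul_comm]
  · intro b hb
    rw [offDiag_card, hD.card_eq_three b hb]
  · intro b hb b' hb' hbb'
    refine disjoint_left.mpr fun p hp hp' => hbb' ?_
    rw [mem_offDiag] at hp hp'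
    exact hD.eq_of_mem hb hb' hp.1 hp.2.1 hp'.1 hp'.2.1 (hD.grp_ne hb hp.1 hp.2.1 hp.2.2)

noncomputable def vertex (β : D) : Fin 3 → V :=
  fun k => (β.1.equivFinOfCardEq (hD.card_eq_three β β.2)).symm k

theorem vertex_mem (β : D) (k : Fin 3) : hD.vertex β k ∈ β.1 :=
  ((β.1.equivFinOfCardEq _).symm k).2

theorem exists_vertex_eq {β : D} {x : V} (hx : x ∈ β.1) : ∃ k, hD.vertex β k = x :=
  ⟨β.1.equivFinOfCardEq (hD.card_eq_three β β.2) ⟨x, hx⟩, by simp [vertex]⟩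

theorem injective_grp_comp_vertex (β : D) : Function.Injective (grp ∘ hD.vertex β) := by
  intro k l hkl
  by_contra hne
  refine hD.grp_ne β.2 (hD.vertex_mem β k) (hD.vertex_mem β l) ?_ hkl
  simpa [vertex, Subtype.ext_iff.not] using hne

theorem grp_vertex_succAbove_ne (β : D) (d : Fin 3) :
    grp (hD.vertex β (d.succAbove 0)) ≠ grp (hD.vertex β (d.succAbove 1)) :=
  (hD.injective_grp_comp_vertex β).ne (Fin.succAbove_right_injective.ne (by decide))

theorem injective_vertex (β : D) : Function.Injective (hD.vertex β) :=
  (hD.injective_grp_comp_vertex β).of_comp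

theorem exists_side_eq {m : ℕ} {p p' : V × Fin m} (hp : grp p.1 ≠ grp p'.1) :
    ∃ β q, ({p, p'} : Finset (V × Fin m)) = side (hD.vertex β) q := by
  obtain ⟨b, hb, hx, hy⟩ := hD.exists_mem hp
  obtain ⟨k, hk⟩ := hD.exists_vertex_eq (β := ⟨b, hb⟩) hx
  obtain ⟨l, hl⟩ := hD.exists_vertex_eq (β := ⟨b, hb⟩) hy
  have hkl : k ≠ l := by rintro rfl; exact hp (hk ▸ hl ▸ rfl)
  obtain ⟨q, hq⟩ := exists_side_eq_pair (hD.vertex ⟨b, hb⟩) hkl p.2 p'.2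
  exact ⟨⟨b, hb⟩, q, by rw [hq, hk, hl]⟩

end IsThreeGDD

theorem IsThreeGDD.three_mul_card {u g : ℕ} [Fintype V] {grp : V → Fin u}
    (hD : IsThreeGDD grp D) (hsize : ∀ i, #{x | grp x = i} = g) : 3 * #D = g ^ 2 * u.choose 2 := by
  have h := card_filter_grp_ne_of_card_fiber hsize
  rw [hD.card_filter_grp_ne] at h
  omega

end GDD

section Inflation

open Finset

variable {V : Type*} [DecidableEq V] {u m : ℕ} {grp : V → Fin u} {D : Finset (Finset V)}

noncomputable def inflate (hD : IsThreeGDD grp D) (f : Fin m → Fin m → Fin m → ℕ) :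
    Multiset (Finset (V × Fin m)) :=
  ∑ β : D, cubeBlocks (fun a b c => f a b c + 3 * m * D.equivFin β) (hD.vertex β)

variable (hD : IsThreeGDD grp D) (f : Fin m → Fin m → Fin m → ℕ)

theorem exists_eq_triangle_of_mem_inflate {t : Finset (V × Fin m)} (ht : t ∈ inflate hD f) :
    ∃ β a b c, t = triangle (hD.vertex β) a b c := by
  obtain ⟨β, -, hβ⟩ := Multiset.mem_sum.mp ht
  exact ⟨β, exists_eq_triangle_of_mem_cubeBlocks hβ⟩

theorem pairFreq_inflate_side (β : D) (q : Fin 3 × Fin m × Fin m) :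
    pairFreq (inflate hD f) (side (hD.vertex β) q) =
      3 * m ^ 2 * D.equivFin β + lineSums m f q := by
  rw [inflate, pairFreq_sum, sum_eq_single β]
  · rw [pairFreq_cubeBlocks_side _ (hD.injective_vertex β), lineSums_add_const]
    ring
  · intro β' _ hne
    refine pairFreq_eq_zero_of_forall_not_subset fun t ht hsub => hne ?_
    obtain ⟨a, b, c, rfl⟩ := exists_eq_triangle_of_mem_cubeBlocks ht
    have hmem : ∀ x ∈ side (hD.vertex β) q, x.1 ∈ β'.1 := fun x hx => by
      obtain ⟨k, rfl⟩ := mem_triangle.mp (hsub hx)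
      exact hD.vertex_mem β' k
    exact Subtype.ext (hD.eq_of_mem β'.2 β.2 (hmem _ (mem_insert_self _ _))
      (hmem _ (mem_insert_of_mem (mem_singleton_self _))) (hD.vertex_mem β _)
      (hD.vertex_mem β _) (hD.grp_vertex_succAbove_ne β q.1))
  · exact fun h => absurd (mem_univ β) h

theorem pairFreq_inflate_of_grp_eq {p p' : V × Fin m} (hne : p ≠ p')
    (hp : grp p.1 = grp p'.1) : pairFreq (inflate hD f) {p, p'} = 0 := by
  refine pairFreq_eq_zero_of_forall_not_subset fun t ht hsub => hne ?_
  obtain ⟨β, a, b, c, rfl⟩ := exists_eq_triangle_of_mem_inflate hD f ht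
  obtain ⟨k, rfl⟩ := mem_triangle.mp (hsub (mem_insert_self p {p'}))
  obtain ⟨l, rfl⟩ := mem_triangle.mp (hsub (mem_insert_of_mem (mem_singleton_self p')))
  rw [hD.injective_grp_comp_vertex β hp]

end Inflation

open Finset in
theorem isSBGDD_inflate {V : Type*} [Fintype V] [DecidableEq V] {u m g : ℕ} {grp : V → Fin u}
    {D : Finset (Finset V)} (hD : IsThreeGDD grp D)
    (hsize : ∀ i, #{x | grp x = i} = g) {f : Fin m → Fin m → Fin m → ℕ} (hf : IsSBC m f) :
    IsSBGDD (m * g) u 0 (fun p => grp p.1) (inflate hD f) := by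
  obtain ⟨hf_inj, hf_lt, hf_surj⟩ := hf
  have htotal : (m * g) ^ 2 * u.choose 2 = #D * (3 * m ^ 2) := by
    rw [show #D * (3 * m ^ 2) = m ^ 2 * (3 * #D) by ring, hD.three_mul_card hsize]
    ring
  refine ⟨fun i => ?_, fun t ht => ?_, fun p p' => pairFreq_inflate_of_grp_eq hD f,
    fun p p' hp => ?_, fun p₁ p₁' p₂ p₂' hp₁ hp₂ heq => ?_, fun n hn => ?_⟩
  · change #{p : V × Fin m | grp p.1 = i} = m * g
    rw [← univ_product_univ, filter_product_left (grp · = i), card_product, hsize, card_univ,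
      Fintype.card_fin, mul_comm]
  · obtain ⟨β, a, b, c, rfl⟩ := exists_eq_triangle_of_mem_inflate hD f ht
    exact card_triangle (hD.injective_vertex β) a b c
  · obtain ⟨β, q, hq⟩ := hD.exists_side_eq hp
    rw [hq, pairFreq_inflate_side, mem_Ico, zero_add, htotal]
    exact ⟨Nat.zero_le _, Nat.mul_add_lt_mul_of_lt_of_lt (D.equivFin β).2 (hf_lt q)⟩
  · obtain ⟨β₁, q₁, hq₁⟩ := hD.exists_side_eq hp₁
    obtain ⟨β₂, q₂, hq₂⟩ := hD.exists_side_eq hp₂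
    rw [hq₁, hq₂] at heq ⊢
    rw [pairFreq_inflate_side, pairFreq_inflate_side] at heq
    obtain ⟨hβ, hq⟩ := Nat.eq_and_eq_of_mul_add_eq (hf_lt q₁) (hf_lt q₂) heq
    rw [D.equivFin.injective (Fin.val_injective hβ), hf_inj hq]
  · rw [mem_Ico, zero_add, htotal] at hn
    have hK : 0 < 3 * m ^ 2 := Nat.pos_of_mul_pos_left (Nat.zero_lt_of_lt hn.2)
    obtain ⟨q, hq⟩ := hf_surj (n % (3 * m ^ 2)) (Nat.mod_lt n hK)
    set β := D.equivFin.symm ⟨n / (3 * m ^ 2), Nat.div_lt_of_lt_mul (mul_comm (#D) _ ▸ hn.2)⟩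
    refine ⟨(hD.vertex β (q.1.succAbove 0), q.2.1), (hD.vertex β (q.1.succAbove 1), q.2.2),
      hD.grp_vertex_succAbove_ne β q.1, ?_⟩
    change pairFreq _ (side (hD.vertex β) q) = n
    rw [pairFreq_inflate_side, hq, Equiv.apply_symm_apply, Nat.div_add_mod]

theorem sbgdd_inflation_general (g u m : ℕ) (V : Type*)
    [Fintype V] [DecidableEq V] (grp : V → Fin u)
    (hsize : ∀ i : Fin u, (Finset.univ.filter (fun x => grp x = i)).card = g)
    (D : Finset (Finset V))
    (hblocks : ∀ b ∈ D, b.card = 3)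
    (hsame : ∀ x y : V, x ≠ y → grp x = grp y →
      ¬∃ b ∈ D, ({x, y} : Finset V) ⊆ b)
    (hcross : ∀ x y : V, grp x ≠ grp y →
      ∃! b, b ∈ D ∧ ({x, y} : Finset V) ⊆ b)
    (hSBC : ∃ f : Fin m → Fin m → Fin m → ℕ, IsSBC m f) :
    ∃ B : Multiset (Finset (V × Fin m)),
      IsSBGDD (m * g) u 0 (fun p => grp p.1) B := by
  obtain ⟨f, hf⟩ := hSBC
  have hD : IsThreeGDD grp D := ⟨hblocks, hsame, hcross⟩
  exact ⟨inflate hD f, isSBGDD_inflate hD hsize hf⟩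

/-- Inflation by a Sarvate-Beam cube: if there exists a 3-GDD of type `g^u`
(a `{3,4,5}`-GDD all of whose blocks have size 3) and a Sarvate-Beam cube
SBC(m) with `m ≥ 2`, then there exists an SBGDD₀ of type `(mg)^u`. -/
theorem sbgdd_inflation (g u m : ℕ) (hm : 2 ≤ m) (V : Type*)
    [Fintype V] [DecidableEq V] (grp : V → Fin u)
    (hsize : ∀ i : Fin u, (Finset.univ.filter (fun x => grp x = i)).card = g)
    (D : Finset (Finset V))
    (hblocks : ∀ b ∈ D, b.card = 3)
    (hsame : ∀ x y : V, x ≠ y → grp x = grp y →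
      ¬∃ b ∈ D, ({x, y} : Finset V) ⊆ b)
    (hcross : ∀ x y : V, grp x ≠ grp y →
      ∃! b, b ∈ D ∧ ({x, y} : Finset V) ⊆ b)
    (hSBC : ∃ f : Fin m → Fin m → Fin m → ℕ, IsSBC m f) :
    ∃ B : Multiset (Finset (V × Fin m)),
      IsSBGDD (m * g) u 0 (fun p => grp p.1) B :=
  sbgdd_inflation_general g u m V grp hsize D hblocks hsame hcross hSBC
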